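/- For any signature Σ and any word w on Σ, the map sending a Σ-term to its connection word is injective on the set of Σ-terms having w as decoration word. -/

import Mathlib

structure Signature where
  carrier : Type
  arity : carrier → ℕ

namespace EW

variable {σ : Signature}

/-- Σ-terms: planar rooted trees with nodes decorated by the signature. -/
inductive PreTerm (σ : Signature) where
  | leaf : PreTerm σ
  | node : σ.carrier → List (PreTerm σ) → PreTerm σ

/-- Well-formedness: each internal node decorated by `s` has `arity s` children. -/
def WF : PreTerm σ → Prop
  | .leaf => True
  | .node s l => l.length = σ.arity s ∧ ∀ t ∈ l, WF t

def isLeaf : PreTerm σ → Bool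
  | .leaf => true
  | .node _ _ => false

/-- Subterm at an address (list of 0-based child positions). -/
def subAt : PreTerm σ → List ℕ → Option (PreTerm σ)
  | t, [] => some t
  | .leaf, _ :: _ => none
  | .node _ l, j :: p =>
      match l[j]? with
      | some t => subAt t p
      | none => none
  termination_by t p => p.length

/-- Replace the subterm at an address. -/
def replaceAt : PreTerm σ → List ℕ → PreTerm σ → PreTerm σ
  | _, [], R => R
  | .leaf, _ :: _, _ => .leaf
  | .node s l, j :: p, R => .node s (l.set j (replaceAt (l.getD j .leaf) p R))
  termination_by t p _ => p.length

/-- Addresses of all positions (internal nodes and leaves) in preorder. -/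
def addrs : PreTerm σ → List (List ℕ)
  | .leaf => [[]]
  | .node _ l =>
      [] :: ((l.attach.map (fun t => addrs t.1)).zipIdx.map Prod.swap |>.map
        (fun jp => jp.2.map (jp.1 :: ·))).flatten
  decreasing_by
    have := List.sizeOf_lt_of_mem t.2
    simp only [PreTerm.node.sizeOf_spec]
    omega

def isNodeAt (T : PreTerm σ) (p : List ℕ) : Bool :=
  match subAt T p with
  | some (.node _ _) => true
  | _ => false

/-- Addresses of internal nodes, in preorder. -/
def nodeAddrs (T : PreTerm σ) : List (List ℕ) := (addrs T).filter (isNodeAt T)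

/-- Degree: number of internal nodes. -/
def deg (T : PreTerm σ) : ℕ := (nodeAddrs T).length

/-- Address of the `i`-th internal node (1-indexed, preorder). -/
def nodeAddr (T : PreTerm σ) (i : ℕ) : Option (List ℕ) := (nodeAddrs T)[i-1]?

/-- Preorder index (1-based) of the internal node at address `p`. -/
def nodeIdx (T : PreTerm σ) (p : List ℕ) : ℕ := (nodeAddrs T).idxOf p + 1

/-- Parent of internal node `i` (the root is its own parent). -/
def paOf (T : PreTerm σ) (i : ℕ) : ℕ :=
  match nodeAddr T i with
  | some [] => 1
  | some p => nodeIdx T p.dropLast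
  | none => 0

/-- Local position of internal node `i` among its parent's children
(1-based; the root has local position 0). -/
def lpOf (T : PreTerm σ) (i : ℕ) : ℕ :=
  match nodeAddr T i with
  | some [] => 0
  | some p => p.getLast?.getD 0 + 1
  | none => 0

def decAt (T : PreTerm σ) (p : List ℕ) : Option σ.carrier :=
  match subAt T p with
  | some (.node s _) => some s
  | _ => none

/-- The decoration word: decorations of internal nodes in preorder. -/
def dcWord (T : PreTerm σ) : List σ.carrier := (nodeAddrs T).filterMap (decAt T)

def arityOfNode (T : PreTerm σ) (i : ℕ) : ℕ :=
  match nodeAddr T i with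
  | some p =>
      match decAt T p with
      | some s => σ.arity s
      | none => 0
  | none => 0

/-- The connection word entry:
`cnc T i = pa T i + 1 - 2 ^ (lp T i - arity (decoration of pa T i))`. -/
def cnc (T : PreTerm σ) (i : ℕ) : ℚ :=
  (paOf T i : ℚ) + 1 - (2 : ℚ) ^ ((lpOf T i : ℤ) - (arityOfNode T (paOf T i) : ℤ))

def cncWord (T : PreTerm σ) : List ℚ := (List.range (deg T)).map (fun k => cnc T (k+1))

/-- The Σ-easterly wind order. -/
def ewLE (T₁ T₂ : PreTerm σ) : Prop :=
  dcWord T₁ = dcWord T₂ ∧ ∀ i, 1 ≤ i → i ≤ deg T₁ → cnc T₁ i ≤ cnc T₂ i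

/-- The easterly wind rewrite rule `T₁ ⇀_i T₂` : the internal node `i` of `T₁`
is visited immediately after a leaf in preorder, and `T₂` is obtained by moving
the subterm rooted at `i` onto that leaf. -/
def Rewrite (i : ℕ) (T₁ T₂ : PreTerm σ) : Prop :=
  ∃ p q k S,
    nodeAddr T₁ i = some p ∧
    (addrs T₁)[k]? = some q ∧ (addrs T₁)[k+1]? = some p ∧
    subAt T₁ q = some .leaf ∧
    subAt T₁ p = some S ∧
    T₂ = replaceAt (replaceAt T₁ p .leaf) q S

def RewriteAny (T₁ T₂ : PreTerm σ) : Prop := ∃ i, 1 ≤ i ∧ Rewrite i T₁ T₂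

/-- `(i₁, j₁, i)` is dominated by `(i₂, j₂, i)` iff `(i₁, -j₁) ≤lex (i₂, -j₂)`:
here on the pairs of (parent, local position). -/
def Dominated (e₁ e₂ : ℕ × ℕ) : Prop := e₁.1 < e₂.1 ∨ (e₁.1 = e₂.1 ∧ e₂.2 ≤ e₁.2)

/-- `i''` is a (strict) descendant of `i'`. -/
def Desc (T : PreTerm σ) (i' i'' : ℕ) : Prop :=
  ∃ p q, nodeAddr T i' = some p ∧ nodeAddr T i'' = some q ∧ p <+: q ∧ p ≠ q

end EW
namespace EW

variable {σ : Signature}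

def sortNodesFirst (l : List (PreTerm σ)) : List (PreTerm σ) :=
  l.filter (fun t => !isLeaf t) ++ l.filter (fun t => isLeaf t)

def sortLeavesFirst (l : List (PreTerm σ)) : List (PreTerm σ) :=
  l.filter (fun t => isLeaf t) ++ l.filter (fun t => !isLeaf t)

mutual
/-- Tilting map: at every internal node whose preorder index (the second
argument is the index of the current root) belongs to `X`, rearrange the
children so that the non-leaf children, keeping their relative order, come
before the leaf children. -/
def tltT (X : ℕ → Prop) [DecidablePred X] : PreTerm σ → ℕ → PreTerm σ
  | .leaf, _ => .leaf
  | .node s l, n =>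
      .node s (if X n then sortNodesFirst (tltL X l (n+1)) else tltL X l (n+1))
def tltL (X : ℕ → Prop) [DecidablePred X] : List (PreTerm σ) → ℕ → List (PreTerm σ)
  | [], _ => []
  | t :: ts, n => tltT X t n :: tltL X ts (n + deg t)
end

mutual
/-- Reversed tilting map: leaf children first. -/
def tltRT (X : ℕ → Prop) [DecidablePred X] : PreTerm σ → ℕ → PreTerm σ
  | .leaf, _ => .leaf
  | .node s l, n =>
      .node s (if X n then sortLeavesFirst (tltRL X l (n+1)) else tltRL X l (n+1))
def tltRL (X : ℕ → Prop) [DecidablePred X] : List (PreTerm σ) → ℕ → List (PreTerm σ)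
  | [], _ => []
  | t :: ts, n => tltRT X t n :: tltRL X ts (n + deg t)
end

/-- The X-tilting map. -/
def tlt (X : ℕ → Prop) [DecidablePred X] (T : PreTerm σ) : PreTerm σ := tltT X T 1

/-- The X-reversed tilting map. -/
def tltR (X : ℕ → Prop) [DecidablePred X] (T : PreTerm σ) : PreTerm σ := tltRT X T 1

/-- Fully tilted: tilted w.r.t. the set of all positive integers. -/
def FullyTilted (T : PreTerm σ) : Prop := tlt (fun n => 1 ≤ n) T = T

/-- {1}-tilted. -/
def tltOne (T : PreTerm σ) : PreTerm σ := tlt (fun n => n = 1) T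

/-- Number of internal-node siblings of the node `i` lying weakly to its left
(including `i` itself). -/
def lb (T : PreTerm σ) (i : ℕ) : ℕ :=
  match nodeAddr T i with
  | some [] => 0
  | some p =>
      match subAt T p.dropLast with
      | some (.node _ l) =>
          ((l.take (p.getLast?.getD 0 + 1)).filter (fun t => !isLeaf t)).length
      | _ => 0
  | none => 0

/-- Scope: number of (strict) internal-node descendants of the node `i`. -/
def sc (T : PreTerm σ) (i : ℕ) : ℕ :=
  match nodeAddr T i with
  | some p =>
      match subAt T p with
      | some S => deg S - 1
      | none => 0
  | none => 0

end EW
namespace EW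

variable {σ : Signature}

/-- The signature Σ_ℕ := Σ ⊔ ℕ, where `n : ℕ` has arity `n`. -/
def sigN (σ : Signature) : Signature := ⟨σ.carrier ⊕ ℕ, Sum.elim σ.arity id⟩

/-- All decorations come from Σ (no ℕ-decoration). -/
def OnlyBase : PreTerm (sigN σ) → Prop
  | .leaf => True
  | .node (Sum.inl _) l => ∀ t ∈ l, OnlyBase t
  | .node (Sum.inr _) _ => False
  decreasing_by
    rename_i v h
    have := List.sizeOf_lt_of_mem h
    have key : ∀ x : (sigN σ).carrier, sizeOf l < sizeOf (PreTerm.node x l) := fun x => by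
      rw [PreTerm.node.sizeOf_spec]; omega
    exact Nat.lt_trans this (key _)

/-- The corolla on `s`: a single internal node with `arity s` leaves. -/
def corolla (s : σ.carrier) : PreTerm σ := .node s (List.replicate (σ.arity s) .leaf)

/-- Number of leaves (arity) of a term. -/
def arT (T : PreTerm σ) : ℕ := ((addrs T).filter (fun p => !isNodeAt T p)).length

mutual
/-- Replace the leftmost leaf of the first term by the second term. -/
def graftLeft : PreTerm σ → PreTerm σ → PreTerm σ
  | .leaf, R => R
  | .node s l, R => .node s (graftLeftL l R)
def graftLeftL : List (PreTerm σ) → PreTerm σ → List (PreTerm σ)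
  | [], _ => []
  | t :: ts, R => if arT t = 0 then t :: graftLeftL ts R else graftLeft t R :: ts
end

/-- `f↑(w)`: the forest of corollas `|w| · C(w 1) ⋯ C(w n)`. -/
def fUp (w : List σ.carrier) : PreTerm (sigN σ) :=
  .node (Sum.inr w.length) (w.map (fun s => corolla (σ := sigN σ) (Sum.inl s)))

/-- `f↓(w)`: iteratively graft the corollas of the letters of `w` onto the
leftmost leaf, starting from the corolla of `|w|`. -/
def fDown (w : List σ.carrier) : PreTerm (sigN σ) :=
  w.foldl (fun F s => graftLeft F (corolla (σ := sigN σ) (Sum.inl s)))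
    (corolla (σ := sigN σ) (Sum.inr w.length))

/-- Σ-forest: a Σ_ℕ-term `n · T₁ ⋯ T_n` with the `Tᵢ`'s Σ-terms. -/
def IsForest (F : PreTerm (sigN σ)) : Prop :=
  WF F ∧ ∃ n l, F = .node (Sum.inr n) l ∧ ∀ t ∈ l, OnlyBase t

/-- Size of a balanced forest: its degree minus one. -/
def fsize (F : PreTerm (sigN σ)) : ℕ := deg F - 1

/-- Balanced Σ-forest: `deg F = n + 1` where `n` decorates the root. -/
def IsBalanced (F : PreTerm (sigN σ)) : Prop :=
  IsForest F ∧ ∃ n l, F = .node (Sum.inr n) l ∧ deg F = n + 1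

/-- Leaning Σ-forest: balanced and {1}-tilted. -/
def IsLeaning (F : PreTerm (sigN σ)) : Prop := IsBalanced F ∧ tltOne F = F

/-- Concatenation of forests. -/
def fconc : PreTerm (sigN σ) → PreTerm (sigN σ) → PreTerm (sigN σ)
  | .node (Sum.inr n) l, .node (Sum.inr n') l' => .node (Sum.inr (n + n')) (l ++ l')
  | F, _ => F

/-- The over operation on leaning forests. -/
def overOp (F₁ F₂ : PreTerm (sigN σ)) : PreTerm (sigN σ) := tltOne (fconc F₁ F₂)

/-- Number of extreme leaves: leaves visited after every internal node. -/
def extremeCount (T : PreTerm σ) : ℕ :=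
  (((addrs T).map (fun p => !isNodeAt T p)).reverse.takeWhile id).length

mutual
/-- Graft the terms of the second argument (listed from the rightmost extreme
leaf to the leftmost) onto the extreme leaves of the first argument, from the
right. Returns the new term, the unused grafts and whether everything seen so
far is still in the extreme zone. -/
def gET : PreTerm σ → List (PreTerm σ) → PreTerm σ × List (PreTerm σ) × Bool
  | .leaf, ts =>
      match ts with
      | [] => (.leaf, [], true)
      | g :: gs => (g, gs, true)
  | .node s l, ts =>
      let r := gEL l ts
      (.node s r.1, r.2.1, false)
def gEL : List (PreTerm σ) → List (PreTerm σ) → List (PreTerm σ) × List (PreTerm σ) × Bool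
  | [], ts => ([], ts, true)
  | t :: us, ts =>
      let r := gEL us ts
      if r.2.2 then
        let a := gET t r.2.1
        (a.1 :: r.1, a.2.1, a.2.2)
      else (t :: r.1, r.2.1, false)
end

def childrenOf : PreTerm (sigN σ) → List (PreTerm (sigN σ))
  | .node _ l => l
  | .leaf => []

/-- The under operation on leaning forests: graft the root subterms of
`F₂ ⌢ C(r)` onto the extreme leaves of `F₁ ⌢ C(n₂)`. -/
def under (F₁ F₂ : PreTerm (sigN σ)) : PreTerm (sigN σ) :=
  (gET (fconc F₁ (corolla (σ := sigN σ) (Sum.inr (fsize F₂))))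
    (List.replicate (extremeCount F₁) PreTerm.leaf ++ (childrenOf F₂).reverse)).1

mutual
/-- Restriction machinery: keep only the internal nodes whose preorder index
satisfies `K`; kept nodes whose parent is removed float to the root. Returns,
for a subterm, the in-place result (a leaf if the root of the subterm is
removed) together with the list of floated subtrees. -/
def restT (K : ℕ → Bool) : PreTerm (sigN σ) → ℕ → PreTerm (sigN σ) × List (PreTerm (sigN σ))
  | .leaf, _ => (.leaf, [])
  | .node s l, n =>
      let r := restL K l (n+1)
      if K n then (.node s (r.map Prod.fst), (r.map Prod.snd).flatten)
      else (.leaf, (r.map (fun a => (if isLeaf a.1 then [] else [a.1]) ++ a.2)).flatten)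
def restL (K : ℕ → Bool) :
    List (PreTerm (sigN σ)) → ℕ → List (PreTerm (sigN σ) × List (PreTerm (sigN σ)))
  | [], _ => []
  | t :: ts, n => restT K t n :: restL K ts (n + deg t)
end

def sumDeg (l : List (PreTerm σ)) : ℕ := (l.map deg).sum

/-- Restriction of a leaning forest to a set `I` of indices: keep the root and
the internal nodes `{i + 1 : i ∈ I}`, together with their adjacent edges;
the root gets decoration `#I` and is padded by leaves on the right. -/
def restrict (F : PreTerm (sigN σ)) (I : Finset ℕ) : PreTerm (sigN σ) :=
  match F with
  | .node (Sum.inr _) l =>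
      let r := restL (fun i => decide (i - 1 ∈ I ∧ 2 ≤ i)) l 2
      let cs := (r.map (fun a => (if isLeaf a.1 then [] else [a.1]) ++ a.2)).flatten
      .node (Sum.inr I.card) (cs ++ List.replicate (I.card - sumDeg cs) .leaf)
  | F => F

/-- k-top restriction. -/
def topRes (k : ℕ) (F : PreTerm (sigN σ)) : PreTerm (sigN σ) := restrict F (Finset.Icc 1 k)

/-- k-bottom restriction. -/
def botRes (k : ℕ) (F : PreTerm (sigN σ)) : PreTerm (sigN σ) :=
  restrict F (Finset.Icc (k+1) (fsize F))

end EW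
namespace EW

/-- The signature ℕ where `arity n = n`. -/
def natSig : Signature := ⟨ℕ, id⟩

/-- `f↑` for words on the signature ℕ. -/
def fUpN (w : List ℕ) : PreTerm natSig :=
  .node w.length (w.map (corolla (σ := natSig)))

/-- `f↓` for words on the signature ℕ. -/
def fDownN (w : List ℕ) : PreTerm natSig :=
  w.foldl (fun F s => graftLeft F (corolla (σ := natSig) s))
    (corolla (σ := natSig) w.length)

/-- The word `dw n = (n-1, n-2, …, 0)`. -/
def dwWord (n : ℕ) : List ℕ := (List.range n).reverse

/-- The minimum `dt n := n · C(n-1) ⋯ C(0)` of the rooted tree easterly wind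
poset of order `n`. -/
def dt (n : ℕ) : PreTerm natSig := fUpN (dwWord n)

/-- Rooted trees. -/
inductive RTree where
  | node : List RTree → RTree

mutual
/-- Size (number of nodes) of a rooted tree. -/
def rsize : RTree → ℕ
  | .node l => 1 + rsizeL l
def rsizeL : List RTree → ℕ
  | [] => 0
  | t :: ts => rsize t + rsizeL ts
end

mutual
/-- Scope sequence of a rooted tree: number of descendants of each node, in
preorder. -/
def scL : RTree → List ℕ
  | .node l => rsizeL l :: scLL l
def scLL : List RTree → List ℕ
  | [] => []
  | t :: ts => scL t ++ scLL ts
end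

/-- The Tamari order on rooted trees (Knuth's realization): componentwise
comparison of scope sequences. -/
def tamLE (R₁ R₂ : RTree) : Prop :=
  rsize R₁ = rsize R₂ ∧ ∀ i, (scL R₁).getD i 0 ≤ (scL R₂).getD i 0

mutual
/-- Underlying rooted tree of a term: delete the leaves and forget the
decorations. -/
def rt {σ : Signature} : PreTerm σ → RTree
  | .leaf => .node []
  | .node _ l => .node (rtL l)
def rtL {σ : Signature} : List (PreTerm σ) → List RTree
  | [] => []
  | .leaf :: ts => rtL ts
  | .node _ l :: ts => .node (rtL l) :: rtL ts
end

end EW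



namespace EW

variable {σ : Signature}

theorem subAt_nil (T : PreTerm σ) : subAt T [] = some T := by cases T <;> simp [subAt]

theorem subAt_leaf_cons (j : ℕ) (p : List ℕ) :
    subAt (.leaf : PreTerm σ) (j :: p) = none := by simp [subAt]

theorem subAt_node_cons (s : σ.carrier) (l : List (PreTerm σ)) (j : ℕ) (p : List ℕ) :
    subAt (.node s l) (j :: p) = (l[j]?).bind (fun t => subAt t p) := by
  rw [subAt]
  cases l[j]? <;> rfl

theorem subAt_append (T : PreTerm σ) (q r : List ℕ) :
    subAt T (q ++ r) = (subAt T q).bind (fun t => subAt t r) := by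
  induction q generalizing T with
  | nil => simp [subAt_nil]
  | cons j q ih =>
    cases T with
    | leaf => simp [subAt_leaf_cons]
    | node s l =>
      simp only [List.cons_append, subAt_node_cons]
      cases l[j]? <;> simp [ih]

def addrsL : ℕ → List (PreTerm σ) → List (List ℕ)
  | _, [] => []
  | j, t :: ts => (addrs t).map (j :: ·) ++ addrsL (j+1) ts

theorem addrs_leaf : addrs (.leaf : PreTerm σ) = [[]] := by simp [addrs]

theorem addrs_node (s : σ.carrier) (l : List (PreTerm σ)) :
    addrs (.node s l) = [] :: addrsL 0 l := by
  rw [addrs]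
  congr 1
  rw [List.attach_map_val (f := addrs)]
  have h : ∀ (j : ℕ) (L : List (PreTerm σ)),
      ((((L.map addrs).zipIdx j).map Prod.swap).map (fun jp => jp.2.map (jp.1 :: ·))).flatten = addrsL j L := by
    intro j L
    induction L generalizing j with
    | nil => rfl
    | cons t ts ih => simp [addrsL, ← ih, List.map_map]
  exact h 0 l


theorem mem_addrsL {p : List ℕ} {j : ℕ} {l : List (PreTerm σ)} :
    p ∈ addrsL j l ↔ ∃ k p' t, l[k]? = some t ∧ p = (j + k) :: p' ∧ p' ∈ addrs t := by
  induction l generalizing j with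
  | nil => simp [addrsL]
  | cons t ts ih =>
    simp only [addrsL, List.mem_append, List.mem_map, ih]
    constructor
    · rintro (⟨p', hp', rfl⟩ | ⟨k, p', u, hu, rfl, hp'⟩)
      · exact ⟨0, p', t, by simp, by simp, hp'⟩
      · exact ⟨k + 1, p', u, by simpa using hu, by ring_nf, hp'⟩
    · rintro ⟨k, p', u, hu, rfl, hp'⟩
      cases k with
      | zero => simp at hu; subst hu; exact Or.inl ⟨p', hp', by simp⟩
      | succ k => exact Or.inr ⟨k, p', u, by simpa using hu, by ring_nf, hp'⟩

theorem mem_addrs_node {p : List ℕ} {s : σ.carrier} {l : List (PreTerm σ)} :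
    p ∈ addrs (.node s l) ↔
      p = [] ∨ ∃ k p' t, l[k]? = some t ∧ p = k :: p' ∧ p' ∈ addrs t := by
  rw [addrs_node]
  simp only [List.mem_cons, mem_addrsL, Nat.zero_add]

theorem nil_mem_addrs (T : PreTerm σ) : [] ∈ addrs T := by
  cases T with
  | leaf => simp [addrs_leaf]
  | node s l => rw [addrs_node]; exact List.mem_cons_self

theorem mem_addrs_of_subAt : ∀ (T : PreTerm σ) (p : List ℕ) (t : PreTerm σ),
    subAt T p = some t → p ∈ addrs T
  | T, [], t, _ => nil_mem_addrs T
  | .leaf, j :: p, t, h => by simp [subAt_leaf_cons] at h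
  | .node s l, j :: p, t, h => by
    rw [subAt_node_cons] at h
    cases hu : l[j]? with
    | none => simp [hu] at h
    | some u =>
      rw [hu] at h
      exact mem_addrs_node.2 (Or.inr ⟨j, p, u, hu, rfl, mem_addrs_of_subAt u p t h⟩)
  termination_by T p _ => p.length

theorem subAt_isSome_of_mem_addrs : ∀ (T : PreTerm σ) (p : List ℕ),
    p ∈ addrs T → (subAt T p).isSome
  | T, [], _ => by simp [subAt_nil]
  | .leaf, j :: p, h => by
    rw [addrs_leaf] at h; simp at h
  | .node s l, j :: p, h => by
    rcases mem_addrs_node.1 h with h' | ⟨k, p', t, ht, he, hp'⟩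
    · exact absurd h' (by simp)
    · injection he with h1 h2
      subst h1; subst h2
      rw [subAt_node_cons, ht]
      exact subAt_isSome_of_mem_addrs t p hp'
  termination_by T p => p.length

theorem head_of_mem_addrsL {p : List ℕ} {j : ℕ} {l : List (PreTerm σ)}
    (h : p ∈ addrsL j l) : ∃ k p', j ≤ k ∧ p = k :: p' := by
  rcases mem_addrsL.1 h with ⟨k, p', t, _, rfl, _⟩
  exact ⟨j + k, p', Nat.le_add_right _ _, rfl⟩

mutual

theorem nodup_addrs : ∀ (T : PreTerm σ), (addrs T).Nodup
  | .leaf => by simp [addrs_leaf]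
  | .node s l => by
    rw [addrs_node]
    refine List.Nodup.cons ?_ (nodup_addrsL l 0)
    intro hmem
    obtain ⟨k, p', _, h⟩ := head_of_mem_addrsL hmem
    exact absurd h (by simp)
  termination_by T => sizeOf T

theorem nodup_addrsL : ∀ (l : List (PreTerm σ)) (j : ℕ), (addrsL j l).Nodup
  | [], _ => List.nodup_nil
  | t :: ts, j => by
    simp only [addrsL]
    refine List.Nodup.append ?_ (nodup_addrsL ts (j+1)) ?_
    · exact (nodup_addrs t).map (fun a b h => (List.cons.injEq .. ▸ h).2)
    · intro p hp hp'
      obtain ⟨p₀, hp₀, rfl⟩ := List.mem_map.1 hp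
      obtain ⟨k, p', hk, h⟩ := head_of_mem_addrsL hp'
      obtain rfl : j = k := (List.cons.injEq .. ▸ h).1
      omega
  termination_by l _ => sizeOf l

end


theorem prefix_mem_addrs {T : PreTerm σ} {p q : List ℕ} (hp : p ∈ addrs T)
    (hq : q <+: p) : q ∈ addrs T := by
  obtain ⟨r, rfl⟩ := hq
  have h1 := subAt_isSome_of_mem_addrs T _ hp
  rw [subAt_append] at h1
  cases h : subAt T q with
  | none => rw [h] at h1; simp at h1
  | some t => exact mem_addrs_of_subAt T q t h


section IdxHelpers

variable {α : Type*} [BEq α] [LawfulBEq α]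

theorem idx_cons_self (a : α) (l : List α) : (a :: l).idxOf a = 0 := by
  simp [List.idxOf_cons]

theorem idx_cons_ne {a b : α} (l : List α) (h : a ≠ b) :
    (b :: l).idxOf a = l.idxOf a + 1 := by
  have : (b == a) = false := by simpa using fun h' => h h'.symm
  simp [List.idxOf_cons, this]

theorem idx_append_mem {a : α} {l₁ : List α} (l₂ : List α) (h : a ∈ l₁) :
    (l₁ ++ l₂).idxOf a = l₁.idxOf a := by
  induction l₁ with
  | nil => simp at h
  | cons c l ih =>
    by_cases hac : a = c
    · subst hac; simp [idx_cons_self]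
    · rw [List.cons_append, idx_cons_ne _ hac, idx_cons_ne _ hac,
        ih ((List.mem_cons.1 h).resolve_left hac)]

theorem idx_append_not_mem {a : α} {l₁ : List α} (l₂ : List α) (h : a ∉ l₁) :
    (l₁ ++ l₂).idxOf a = l₁.length + l₂.idxOf a := by
  induction l₁ with
  | nil => simp
  | cons c l ih =>
    have hac : a ≠ c := fun h' => h (h' ▸ List.mem_cons_self)
    rw [List.cons_append, idx_cons_ne _ hac, ih (fun h' => h (List.mem_cons_of_mem _ h'))]
    simp [Nat.add_assoc, Nat.add_comm 1]

theorem idx_lt_length {a : α} {l : List α} (h : a ∈ l) : l.idxOf a < l.length := by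
  induction l with
  | nil => simp at h
  | cons c l ih =>
    by_cases hac : a = c
    · subst hac; simp [idx_cons_self]
    · rw [idx_cons_ne _ hac]
      have := ih ((List.mem_cons.1 h).resolve_left hac)
      simp; omega

theorem getElem?_idx {a : α} {l : List α} (h : a ∈ l) : l[l.idxOf a]? = some a := by
  induction l with
  | nil => simp at h
  | cons c l ih =>
    by_cases hac : a = c
    · subst hac; simp [idx_cons_self]
    · rw [idx_cons_ne _ hac]
      simpa using ih ((List.mem_cons.1 h).resolve_left hac)

end IdxHelpers

theorem indexOf_map_cons (j : ℕ) (x : List ℕ) (L : List (List ℕ)) :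
    (L.map (j :: ·)).idxOf (j :: x) = L.idxOf x := by
  induction L with
  | nil => simp
  | cons a L ih =>
    by_cases h : x = a
    · subst h; rw [List.map_cons, idx_cons_self, idx_cons_self]
    · rw [List.map_cons, idx_cons_ne _ (by simpa using h), idx_cons_ne _ h, ih]

mutual

theorem indexOf_addrs_lt : ∀ (T : PreTerm σ) {q p : List ℕ}, p ∈ addrs T → q <+: p → q ≠ p →
    (addrs T).idxOf q < (addrs T).idxOf p
  | .leaf, q, p, hp, hq, hne => by
    rw [addrs_leaf] at hp ⊢
    simp only [List.mem_singleton] at hp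
    subst hp
    exact absurd (List.prefix_nil.1 hq) hne
  | .node s l, q, p, hp, hq, hne => by
    rw [addrs_node] at hp ⊢
    by_cases hqnil : q = []
    · subst hqnil
      have hpnil : p ≠ [] := fun h => hne h.symm
      rw [idx_cons_self, idx_cons_ne _ hpnil]
      omega
    · have hpnil : p ≠ [] := by
        intro h; subst h; exact hqnil (List.prefix_nil.1 hq)
      have hpL : p ∈ addrsL 0 l := by
        rcases List.mem_cons.1 hp with h | h
        · exact absurd h hpnil
        · exact h
      have hqL : q ∈ addrsL 0 l := by
        have : q ∈ addrs (.node s l) := prefix_mem_addrs (by rw [addrs_node]; exact hp) hq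
        rw [addrs_node] at this
        rcases List.mem_cons.1 this with h | h
        · exact absurd h hqnil
        · exact h
      rw [idx_cons_ne _ hqnil, idx_cons_ne _ hpnil]
      have := indexOf_addrsL_lt l 0 hqL hpL hq hne
      omega
  termination_by T => sizeOf T

theorem indexOf_addrsL_lt : ∀ (l : List (PreTerm σ)) (j : ℕ) {q p : List ℕ},
    q ∈ addrsL j l → p ∈ addrsL j l → q <+: p → q ≠ p →
    (addrsL j l).idxOf q < (addrsL j l).idxOf p
  | [], j, q, p, hq, hp, _, _ => by simp [addrsL] at hq
  | t :: ts, j, q, p, hq, hp, hpre, hne => by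
    simp only [addrsL] at hq hp ⊢
    rcases List.mem_append.1 hq with hqA | hqB
    · obtain ⟨q₀, hq₀, rfl⟩ := List.mem_map.1 hqA
      have hpA : p ∈ (addrs t).map (j :: ·) := by
        rcases List.mem_append.1 hp with h | h
        · exact h
        · obtain ⟨k, p', hk, rfl⟩ := head_of_mem_addrsL h
          obtain ⟨h1, -⟩ := List.cons_prefix_cons.1 hpre
          omega
      obtain ⟨p₀, hp₀, rfl⟩ := List.mem_map.1 hpA
      obtain ⟨h1, hpre₀⟩ := List.cons_prefix_cons.1 hpre
      rw [idx_append_mem _ hqA, idx_append_mem _ hpA,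
        indexOf_map_cons, indexOf_map_cons]
      exact indexOf_addrs_lt t hp₀ hpre₀ (fun h => hne (by rw [h]))
    · obtain ⟨k, q₀, hk, rfl⟩ := head_of_mem_addrsL hqB
      have hpB : p ∈ addrsL (j+1) ts := by
        rcases List.mem_append.1 hp with h | h
        · obtain ⟨p₀, hp₀, rfl⟩ := List.mem_map.1 h
          obtain ⟨h1, -⟩ := List.cons_prefix_cons.1 hpre
          omega
        · exact h
      obtain ⟨k', p₀, hk', hp'⟩ := head_of_mem_addrsL hpB
      obtain ⟨h1, hpre₀⟩ := List.cons_prefix_cons.1 (hp' ▸ hpre)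
      have hqnA : (k :: q₀) ∉ (addrs t).map (j :: ·) := by
        intro h
        obtain ⟨x, -, hx⟩ := List.mem_map.1 h
        injection hx with hx1 _
        omega
      have hpnA : p ∉ (addrs t).map (j :: ·) := by
        intro h
        obtain ⟨x, -, hx⟩ := List.mem_map.1 h
        rw [hp'] at hx
        injection hx with hx1 _
        omega
      rw [idx_append_not_mem _ hqnA, idx_append_not_mem _ hpnA]
      have := indexOf_addrsL_lt ts (j+1) hqB hpB hpre hne
      omega
  termination_by l _ => sizeOf l

end

theorem indexOf_filter_lt {α : Type*} [BEq α] [LawfulBEq α] {l : List α} {f : α → Bool}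
    (hl : l.Nodup) {a b : α} (ha : a ∈ l.filter f) (hb : b ∈ l.filter f)
    (hab : l.idxOf a < l.idxOf b) :
    (l.filter f).idxOf a < (l.filter f).idxOf b := by
  induction l with
  | nil => simp at ha
  | cons c l ih =>
    obtain ⟨hcl, hnd⟩ := List.nodup_cons.1 hl
    have hne : a ≠ b := fun h => by subst h; exact lt_irrefl _ hab
    by_cases hac : a = c
    · subst hac
      have hfa : f a = true := (List.mem_filter.1 ha).2
      rw [List.filter_cons_of_pos hfa, idx_cons_self]
      have hbtl : b ∈ l.filter f := by
        have := List.mem_filter.1 hb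
        exact List.mem_filter.2 ⟨(List.mem_cons.1 this.1).resolve_left (fun h => hne h.symm), this.2⟩
      rw [idx_cons_ne _ (Ne.symm hne)]
      omega
    · by_cases hbc : b = c
      · subst hbc
        rw [idx_cons_self] at hab
        omega
      · rw [idx_cons_ne _ hac, idx_cons_ne _ hbc] at hab
        have ha' : a ∈ l.filter f := by
          have := List.mem_filter.1 ha
          exact List.mem_filter.2 ⟨(List.mem_cons.1 this.1).resolve_left hac, this.2⟩
        have hb' : b ∈ l.filter f := by
          have := List.mem_filter.1 hb
          exact List.mem_filter.2 ⟨(List.mem_cons.1 this.1).resolve_left hbc, this.2⟩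
        have hrec := ih hnd ha' hb' (by omega)
        cases hfc : f c with
        | false => rw [List.filter_cons_of_neg (by simp [hfc])]; exact hrec
        | true =>
          rw [List.filter_cons_of_pos hfc, idx_cons_ne _ hac, idx_cons_ne _ hbc]
          omega


theorem WF_node_iff {s : σ.carrier} {l : List (PreTerm σ)} :
    WF (.node s l : PreTerm σ) ↔ l.length = σ.arity s ∧ ∀ t ∈ l, WF t := by rw [WF]

theorem mem_nodeAddrs_iff {T : PreTerm σ} {p : List ℕ} :
    p ∈ nodeAddrs T ↔ ∃ s l, subAt T p = some (.node s l) := by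
  constructor
  · intro h
    obtain ⟨h1, h2⟩ := List.mem_filter.1 h
    unfold isNodeAt at h2
    cases hs : subAt T p with
    | none => rw [hs] at h2; simp at h2
    | some u =>
      cases u with
      | leaf => rw [hs] at h2; simp at h2
      | node s l => exact ⟨s, l, rfl⟩
  · rintro ⟨s, l, h⟩
    exact List.mem_filter.2 ⟨mem_addrs_of_subAt T p _ h, by simp [isNodeAt, h]⟩

theorem nodup_nodeAddrs (T : PreTerm σ) : (nodeAddrs T).Nodup :=
  (nodup_addrs T).filter _

theorem nodeAddr_nodeIdx {T : PreTerm σ} {q : List ℕ} (h : q ∈ nodeAddrs T) :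
    nodeAddr T (nodeIdx T q) = some q := by
  unfold nodeAddr nodeIdx
  simp only [Nat.add_sub_cancel]
  exact getElem?_idx h

theorem nodeAddr_mem {T : PreTerm σ} {i : ℕ} {p : List ℕ} (h : nodeAddr T i = some p) :
    p ∈ nodeAddrs T := List.mem_of_getElem? h

theorem indexOf_nodeAddr {T : PreTerm σ} {i : ℕ} {p : List ℕ}
    (h : nodeAddr T i = some p) : (nodeAddrs T).idxOf p = i - 1 := by
  have hm : p ∈ nodeAddrs T := nodeAddr_mem h
  exact (List.getElem?_inj (idx_lt_length hm) (nodup_nodeAddrs T)).1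
    ((getElem?_idx hm).trans h.symm)

theorem nodeAddrs_node (s : σ.carrier) (l : List (PreTerm σ)) :
    nodeAddrs (.node s l) = [] :: (addrsL 0 l).filter (isNodeAt (.node s l)) := by
  unfold nodeAddrs
  rw [addrs_node, List.filter_cons_of_pos (by simp [isNodeAt, subAt_nil])]

theorem nodeAddr_one {T : PreTerm σ} (h : 1 ≤ deg T) : nodeAddr T 1 = some [] := by
  cases T with
  | leaf =>
    exfalso
    have : nodeAddrs (.leaf : PreTerm σ) = [] := by
      unfold nodeAddrs
      rw [addrs_leaf]
      simp [isNodeAt, subAt_nil]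
    unfold deg at h
    rw [this] at h
    simp at h
  | node s l =>
    unfold nodeAddr
    rw [nodeAddrs_node]
    simp

theorem nodeAddr_nil_eq_one {T : PreTerm σ} {i : ℕ} (h1 : 1 ≤ i)
    (h : nodeAddr T i = some []) : i = 1 := by
  have hlen : i - 1 < (nodeAddrs T).length := (List.getElem?_eq_some_iff.1 h).1
  have hdeg : 1 ≤ deg T := by unfold deg; omega
  have h2 := indexOf_nodeAddr h
  have h3 := indexOf_nodeAddr (nodeAddr_one hdeg)
  omega

theorem subAt_parent {T : PreTerm σ} {q : List ℕ} {j : ℕ} {u : PreTerm σ}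
    (h : subAt T (q ++ [j]) = some u) :
    ∃ s l, subAt T q = some (.node s l) ∧ l[j]? = some u := by
  rw [subAt_append] at h
  cases hq : subAt T q with
  | none => rw [hq] at h; simp at h
  | some t =>
    rw [hq] at h
    cases t with
    | leaf => rw [Option.bind_some, subAt_leaf_cons] at h; exact absurd h (by simp)
    | node s l =>
      rw [Option.bind_some, subAt_node_cons] at h
      refine ⟨s, l, rfl, ?_⟩
      cases hj : l[j]? with
      | none => rw [hj] at h; simp at h
      | some t' =>
        rw [hj] at h
        rw [Option.bind_some, subAt_nil] at h
        rw [h]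

theorem WF_subAt : ∀ {T : PreTerm σ} {p : List ℕ} {u : PreTerm σ},
    WF T → subAt T p = some u → WF u
  | T, [], u, hw, h => by rw [subAt_nil] at h; injection h with h; exact h ▸ hw
  | .leaf, j :: p, u, hw, h => by rw [subAt_leaf_cons] at h; exact absurd h (by simp)
  | .node s l, j :: p, u, hw, h => by
    rw [subAt_node_cons] at h
    cases hj : l[j]? with
    | none => rw [hj] at h; simp at h
    | some t =>
      rw [hj, Option.bind_some] at h
      exact WF_subAt ((WF_node_iff.1 hw).2 t (List.mem_of_getElem? hj)) h
  termination_by T p _ => p.length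

theorem paOf_eq {T : PreTerm σ} {i : ℕ} {q : List ℕ} {j : ℕ}
    (h : nodeAddr T i = some (q ++ [j])) : paOf T i = nodeIdx T q := by
  cases hqj : q ++ [j] with
  | nil => exact absurd hqj (by simp)
  | cons a p' =>
    rw [hqj] at h
    have : (a :: p').dropLast = q := by rw [← hqj]; exact List.dropLast_concat ..
    simp only [paOf, h, this]

theorem lpOf_eq {T : PreTerm σ} {i : ℕ} {q : List ℕ} {j : ℕ}
    (h : nodeAddr T i = some (q ++ [j])) : lpOf T i = j + 1 := by
  cases hqj : q ++ [j] with
  | nil => exact absurd hqj (by simp)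
  | cons a p' =>
    rw [hqj] at h
    have : (a :: p').getLast? = some j := by rw [← hqj]; exact List.getLast?_concat ..
    simp only [lpOf, h, this, Option.getD_some]

theorem paOf_spec {T : PreTerm σ} {i : ℕ} {q : List ℕ} {j : ℕ} (h1 : 1 ≤ i)
    (h : nodeAddr T i = some (q ++ [j])) :
    nodeAddr T (paOf T i) = some q ∧ 1 ≤ paOf T i ∧ paOf T i < i := by
  obtain ⟨s, l, hsub⟩ := mem_nodeAddrs_iff.1 (nodeAddr_mem h)
  obtain ⟨s', l', hq, hj⟩ := subAt_parent hsub
  have hqmem : q ∈ nodeAddrs T := mem_nodeAddrs_iff.2 ⟨s', l', hq⟩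
  have hpmem : (q ++ [j]) ∈ nodeAddrs T := nodeAddr_mem h
  rw [paOf_eq h]
  refine ⟨nodeAddr_nodeIdx hqmem, by unfold nodeIdx; omega, ?_⟩
  have horder : (addrs T).idxOf q < (addrs T).idxOf (q ++ [j]) :=
    indexOf_addrs_lt T ((List.mem_filter.1 hpmem).1) (by simp) (by simp)
  have hford : (nodeAddrs T).idxOf q < (nodeAddrs T).idxOf (q ++ [j]) :=
    indexOf_filter_lt (nodup_addrs T) hqmem hpmem horder
  have hip := indexOf_nodeAddr h
  unfold nodeIdx
  omega

theorem getElem?_filterMap_all {α β : Type*} {f : α → Option β} :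
    ∀ {l : List α}, (∀ a ∈ l, (f a).isSome) → ∀ (m : ℕ), (l.filterMap f)[m]? = l[m]?.bind f
  | [], _, m => by simp
  | a :: l, h, m => by
    cases hfa : f a with
    | none => exact absurd (h a (by simp)) (by simp [hfa])
    | some b =>
      rw [List.filterMap_cons_some hfa]
      cases m with
      | zero => simp [hfa]
      | succ m =>
        simp only [List.getElem?_cons_succ]
        exact getElem?_filterMap_all (fun x hx => h x (by simp [hx])) m

theorem length_filterMap_all {α β : Type*} {f : α → Option β} :
    ∀ {l : List α}, (∀ a ∈ l, (f a).isSome) → (l.filterMap f).length = l.length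
  | [], _ => rfl
  | a :: l, h => by
    cases hfa : f a with
    | none => exact absurd (h a (by simp)) (by simp [hfa])
    | some b =>
      rw [List.filterMap_cons_some hfa, List.length_cons, List.length_cons,
        length_filterMap_all (fun x hx => h x (by simp [hx]))]

theorem decAt_isSome_of_mem {T : PreTerm σ} {p : List ℕ} (h : p ∈ nodeAddrs T) :
    (decAt T p).isSome := by
  obtain ⟨s, l, hs⟩ := mem_nodeAddrs_iff.1 h
  simp [decAt, hs]

theorem deg_eq_length_dcWord (T : PreTerm σ) : deg T = (dcWord T).length := by
  unfold deg dcWord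
  rw [length_filterMap_all (fun p hp => decAt_isSome_of_mem hp)]

theorem dcWord_getElem? (T : PreTerm σ) (m : ℕ) :
    (dcWord T)[m]? = (nodeAddr T (m+1)).bind (decAt T) := by
  unfold dcWord nodeAddr
  rw [getElem?_filterMap_all (fun p hp => decAt_isSome_of_mem hp)]
  simp

theorem arityOfNode_eq {T : PreTerm σ} {i : ℕ} {p : List ℕ} {s : σ.carrier}
    (h : nodeAddr T i = some p) (hdec : decAt T p = some s) :
    arityOfNode T i = σ.arity s := by
  simp [arityOfNode, h, hdec]

theorem lp_bounds {T : PreTerm σ} (hw : WF T) {i : ℕ} {q : List ℕ} {j : ℕ}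
    (h : nodeAddr T i = some (q ++ [j])) :
    1 ≤ lpOf T i ∧ lpOf T i ≤ arityOfNode T (paOf T i) := by
  obtain ⟨s, l, hsub⟩ := mem_nodeAddrs_iff.1 (nodeAddr_mem h)
  obtain ⟨s', l', hq, hj⟩ := subAt_parent hsub
  have hqmem : q ∈ nodeAddrs T := mem_nodeAddrs_iff.2 ⟨s', l', hq⟩
  have hwq : WF (.node s' l') := WF_subAt hw hq
  have hjlen : j < l'.length := (List.getElem?_eq_some_iff.1 hj).1
  have hpa : nodeAddr T (paOf T i) = some q := by
    rw [paOf_eq h]; exact nodeAddr_nodeIdx hqmem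
  have har : arityOfNode T (paOf T i) = σ.arity s' :=
    arityOfNode_eq hpa (by simp [decAt, hq])
  rw [lpOf_eq h, har, ← (WF_node_iff.1 hwq).1]
  omega


theorem cnc_arith {pa₁ pa₂ lp₁ lp₂ ar₁ ar₂ : ℕ} (h1 : 1 ≤ lp₁) (h2 : lp₁ ≤ ar₁)
    (h3 : 1 ≤ lp₂) (h4 : lp₂ ≤ ar₂)
    (h : (pa₁ : ℚ) + 1 - 2 ^ ((lp₁ : ℤ) - ar₁) = (pa₂ : ℚ) + 1 - 2 ^ ((lp₂ : ℤ) - ar₂)) :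
    pa₁ = pa₂ ∧ (ar₁ = ar₂ → lp₁ = lp₂) := by
  have e1 : (lp₁ : ℤ) - ar₁ ≤ 0 := by
    have := h2; omega
  have e2 : (lp₂ : ℤ) - ar₂ ≤ 0 := by
    have := h4; omega
  have b1 : (0:ℚ) < 2 ^ ((lp₁:ℤ) - ar₁) := zpow_pos (by norm_num) _
  have b2 : (0:ℚ) < 2 ^ ((lp₂:ℤ) - ar₂) := zpow_pos (by norm_num) _
  have c1 : (2:ℚ) ^ ((lp₁:ℤ) - ar₁) ≤ 1 := zpow_le_one_of_nonpos₀ (by norm_num) e1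
  have c2 : (2:ℚ) ^ ((lp₂:ℤ) - ar₂) ≤ 1 := zpow_le_one_of_nonpos₀ (by norm_num) e2
  have hpa : pa₁ = pa₂ := by
    have l1 : (pa₁ : ℚ) < pa₂ + 1 := by linarith
    have l2 : (pa₂ : ℚ) < pa₁ + 1 := by linarith
    have := l1; have := l2
    exact_mod_cast Nat.le_antisymm (by exact_mod_cast Nat.lt_succ_iff.1 (by exact_mod_cast l1))
      (by exact_mod_cast Nat.lt_succ_iff.1 (by exact_mod_cast l2))
  refine ⟨hpa, fun har => ?_⟩
  subst hpa
  have hpow : (2:ℚ) ^ ((lp₁:ℤ) - ar₁) = 2 ^ ((lp₂:ℤ) - ar₂) := by linarith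
  have := zpow_right_injective₀ (by norm_num : (0:ℚ) < 2) (by norm_num) hpow
  omega

theorem decAt_nil_leaf : decAt (.leaf : PreTerm σ) [] = none := by
  unfold decAt; rw [subAt_nil]

theorem decAt_nil_node (s : σ.carrier) (l : List (PreTerm σ)) :
    decAt (.node s l) [] = some s := by
  unfold decAt; rw [subAt_nil]

theorem decAt_node_cons (s : σ.carrier) (l : List (PreTerm σ)) (j : ℕ) (p : List ℕ) :
    decAt (.node s l) (j :: p) = (l[j]?).bind (fun t => decAt t p) := by
  unfold decAt
  rw [subAt_node_cons]
  cases l[j]? with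
  | none => simp
  | some t => simp

theorem mem_nodeAddrs_of_decAt {T : PreTerm σ} {p : List ℕ} {s : σ.carrier}
    (h : decAt T p = some s) : p ∈ nodeAddrs T := by
  unfold decAt at h
  cases hs : subAt T p with
  | none => rw [hs] at h; simp at h
  | some u =>
    cases u with
    | leaf => rw [hs] at h; simp at h
    | node s' l' => exact mem_nodeAddrs_iff.2 ⟨s', l', hs⟩

theorem decAt_ext : ∀ (T₁ T₂ : PreTerm σ), WF T₁ → WF T₂ →
    (∀ p, decAt T₁ p = decAt T₂ p) → T₁ = T₂
  | .leaf, .leaf, _, _, _ => rfl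
  | .leaf, .node s l, _, _, h =>
    absurd (h []) (by rw [decAt_nil_leaf, decAt_nil_node]; simp)
  | .node s l, .leaf, _, _, h =>
    absurd (h []) (by rw [decAt_nil_leaf, decAt_nil_node]; simp)
  | .node s₁ l₁, .node s₂ l₂, hw₁, hw₂, h => by
    have hs : s₁ = s₂ := by
      have := h []
      rw [decAt_nil_node, decAt_nil_node] at this
      exact Option.some_injective _ this
    subst hs
    have hlen : l₁.length = l₂.length := by
      rw [(WF_node_iff.1 hw₁).1, (WF_node_iff.1 hw₂).1]
    congr 1
    apply List.ext_getElem hlen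
    intro j hj₁ hj₂
    apply decAt_ext _ _ ((WF_node_iff.1 hw₁).2 _ (List.getElem_mem hj₁))
      ((WF_node_iff.1 hw₂).2 _ (List.getElem_mem hj₂))
    intro p
    have hjp := h (j :: p)
    rw [decAt_node_cons, decAt_node_cons, List.getElem?_eq_getElem hj₁,
      List.getElem?_eq_getElem hj₂, Option.bind_some, Option.bind_some] at hjp
    exact hjp
  termination_by T₁ _ _ _ _ => sizeOf T₁
  decreasing_by
    have := List.sizeOf_lt_of_mem (List.getElem_mem hj₁)
    simp only [PreTerm.node.sizeOf_spec]
    omega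

theorem nodeAddr_isSome {T : PreTerm σ} {i : ℕ} (h2 : i ≤ deg T) (h1 : 1 ≤ i) :
    ∃ p, nodeAddr T i = some p := by
  unfold nodeAddr
  have : i - 1 < (nodeAddrs T).length := by unfold deg at h2; omega
  exact ⟨_, List.getElem?_eq_getElem this⟩

end EW

/-- the connection-word map is injective on the Σ-terms having a
given decoration word `w`. -/
theorem stmt1 (σ : Signature) (w : List σ.carrier) (T₁ T₂ : EW.PreTerm σ)
    (h₁ : EW.WF T₁) (h₂ : EW.WF T₂)
    (hd₁ : EW.dcWord T₁ = w) (hd₂ : EW.dcWord T₂ = w)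
    (hc : EW.cncWord T₁ = EW.cncWord T₂) : T₁ = T₂ := by
  classical
  open EW in
  have hdeg₁ : EW.deg T₁ = w.length := by rw [EW.deg_eq_length_dcWord, hd₁]
  have hdeg₂ : EW.deg T₂ = w.length := by rw [EW.deg_eq_length_dcWord, hd₂]
  have hcnc : ∀ i, 1 ≤ i → i ≤ w.length → EW.cnc T₁ i = EW.cnc T₂ i := by
    intro i hi1 hi2
    have hcg := congrArg (fun l => l[i-1]?) hc
    simp only [EW.cncWord] at hcg
    rw [List.getElem?_map, List.getElem?_map] at hcg
    rw [List.getElem?_range (by omega : i - 1 < EW.deg T₁),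
      List.getElem?_range (by omega : i - 1 < EW.deg T₂)] at hcg
    simp only [Option.map_some] at hcg
    have : i - 1 + 1 = i := by omega
    rw [this] at hcg
    exact Option.some_injective _ hcg
  -- decoration/arity at an index is shared
  have hdc : ∀ pa : ℕ, ∀ q₁ q₂ : List ℕ, EW.nodeAddr T₁ pa = some q₁ →
      EW.nodeAddr T₂ pa = some q₂ → 1 ≤ pa →
      EW.decAt T₁ q₁ = EW.decAt T₂ q₂ := by
    intro pa q₁ q₂ hq₁ hq₂ hpa
    have e₁ := EW.dcWord_getElem? T₁ (pa - 1)
    have e₂ := EW.dcWord_getElem? T₂ (pa - 1)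
    have hp1 : pa - 1 + 1 = pa := by omega
    rw [hp1] at e₁ e₂
    rw [hq₁, Option.bind_some] at e₁
    rw [hq₂, Option.bind_some] at e₂
    rw [← e₁, ← e₂, hd₁, hd₂]
  have key : ∀ i, 1 ≤ i → i ≤ w.length → EW.nodeAddr T₁ i = EW.nodeAddr T₂ i := by
    intro i
    induction i using Nat.strong_induction_on with
    | _ i ih =>
      intro hi1 hi2
      rcases Nat.lt_or_ge i 2 with hi | hi
      · have hieq : i = 1 := by omega
        subst hieq
        rw [EW.nodeAddr_one (by omega : 1 ≤ EW.deg T₁),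
          EW.nodeAddr_one (by omega : 1 ≤ EW.deg T₂)]
      · obtain ⟨p₁, hp₁⟩ := EW.nodeAddr_isSome (T := T₁) (i := i) (by omega) (by omega)
        obtain ⟨p₂, hp₂⟩ := EW.nodeAddr_isSome (T := T₂) (i := i) (by omega) (by omega)
        have hne₁ : p₁ ≠ [] := fun hnil => by
          have := EW.nodeAddr_nil_eq_one (by omega) (hnil ▸ hp₁); omega
        have hne₂ : p₂ ≠ [] := fun hnil => by
          have := EW.nodeAddr_nil_eq_one (by omega) (hnil ▸ hp₂); omega
        obtain ⟨q₁, j₁, rfl⟩ : ∃ q j, p₁ = q ++ [j] := by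
          rcases List.eq_nil_or_concat p₁ with h | ⟨L, b, h⟩
          · exact absurd h hne₁
          · exact ⟨L, b, by rw [h, List.concat_eq_append]⟩
        obtain ⟨q₂, j₂, rfl⟩ : ∃ q j, p₂ = q ++ [j] := by
          rcases List.eq_nil_or_concat p₂ with h | ⟨L, b, h⟩
          · exact absurd h hne₂
          · exact ⟨L, b, by rw [h, List.concat_eq_append]⟩
        obtain ⟨hpar₁, hpa₁ge, hpa₁lt⟩ := EW.paOf_spec (by omega) hp₁
        obtain ⟨hpar₂, hpa₂ge, hpa₂lt⟩ := EW.paOf_spec (by omega) hp₂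
        obtain ⟨hlp₁ge, hlp₁le⟩ := EW.lp_bounds h₁ hp₁
        obtain ⟨hlp₂ge, hlp₂le⟩ := EW.lp_bounds h₂ hp₂
        have hceq := hcnc i (by omega) hi2
        unfold EW.cnc at hceq
        obtain ⟨hpaeq, hlpimp⟩ := EW.cnc_arith hlp₁ge hlp₁le hlp₂ge hlp₂le hceq
        -- parents agree by IH
        have hihpa := ih (EW.paOf T₁ i) hpa₁lt hpa₁ge (by omega)
        have hpar₁' : EW.nodeAddr T₂ (EW.paOf T₂ i) = some q₁ := by
          rw [← hpaeq, ← hihpa]; exact hpar₁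
        have hqeq : q₁ = q₂ := Option.some_injective _ (hpar₁'.symm.trans hpar₂)
        subst hqeq
        -- arities agree
        have hpar₂' : EW.nodeAddr T₂ (EW.paOf T₁ i) = some q₁ := by
          rw [hpaeq]; exact hpar₂
        have hareq : EW.arityOfNode T₁ (EW.paOf T₁ i) = EW.arityOfNode T₂ (EW.paOf T₂ i) := by
          have hdq := hdc (EW.paOf T₁ i) q₁ q₁ hpar₁ hpar₂' (by omega)
          cases hv : EW.decAt T₂ q₁ with
          | none =>
            exfalso
            have := EW.decAt_isSome_of_mem (EW.nodeAddr_mem hpar₂)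
            rw [hv] at this; simp at this
          | some sv =>
            rw [hv] at hdq
            rw [EW.arityOfNode_eq hpar₁ hdq, EW.arityOfNode_eq hpar₂ hv]
        have hlpeq : EW.lpOf T₁ i = EW.lpOf T₂ i := hlpimp (by rw [hpaeq] at hareq ⊢; exact_mod_cast hareq)
        have hj : j₁ = j₂ := by
          have e1 := EW.lpOf_eq hp₁
          have e2 := EW.lpOf_eq hp₂
          omega
        rw [hp₁, hp₂, hj]
  have hna : EW.nodeAddrs T₁ = EW.nodeAddrs T₂ := by
    apply List.ext_getElem?
    intro m
    rcases Nat.lt_or_ge m w.length with hm | hm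
    · have := key (m+1) (by omega) (by omega)
      unfold EW.nodeAddr at this
      simpa using this
    · rw [List.getElem?_eq_none, List.getElem?_eq_none]
      · unfold EW.deg at hdeg₂; omega
      · unfold EW.deg at hdeg₁; omega
  have hdec : ∀ p, EW.decAt T₁ p = EW.decAt T₂ p := by
    intro p
    by_cases hp : p ∈ EW.nodeAddrs T₁
    · have hp₂ : p ∈ EW.nodeAddrs T₂ := hna ▸ hp
      have hidx : EW.nodeIdx T₁ p = EW.nodeIdx T₂ p := by
        unfold EW.nodeIdx; rw [hna]
      have e₁ := EW.nodeAddr_nodeIdx hp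
      have e₂ := EW.nodeAddr_nodeIdx hp₂
      rw [hidx] at e₁
      have h1 : 1 ≤ EW.nodeIdx T₂ p := by unfold EW.nodeIdx; omega
      exact hdc (EW.nodeIdx T₂ p) p p e₁ e₂ h1
    · have hp₂ : p ∉ EW.nodeAddrs T₂ := hna ▸ hp
      cases hv₁ : EW.decAt T₁ p with
      | none =>
        cases hv₂ : EW.decAt T₂ p with
        | none => rfl
        | some s => exact absurd (EW.mem_nodeAddrs_of_decAt hv₂) hp₂
      | some s => exact absurd (EW.mem_nodeAddrs_of_decAt hv₁) hp
  exact EW.decAt_ext T₁ T₂ h₁ h₂ hdec
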